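/- There exists a constant C > 0 such that for all nonnegative f, g ∈ L¹((1+e^x)dxdy) on ℝ², ∬ e^x T(f,g)(x,y) dx dy ≤ C ‖f‖_{L¹((1+e^x)dxdy)} ‖g‖_{L¹((1+e^x)dxdy)}, where T(f,g)(x,y) = ∬∬ Γ_{σx²}(x-(x₁+x₂)/2) Γ_{σy²}(y-(y₁+y₂)/2) x₁⁺ f(x₁,y₁) g(x₂,y₂) dx₁dy₁dx₂dy₂. -/

import Mathlib

open MeasureTheory Real

noncomputable def gauss (v z : ℝ) : ℝ :=
  (Real.sqrt (2 * Real.pi * v))⁻¹ * Real.exp (-z ^ 2 / (2 * v))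

open scoped ENNReal

/-! Bound each iterated Bochner integral by the iterated Lebesgue integral of its modulus and use
Tonelli to integrate in `(x, y)` first. Completing the square gives
`∫ eˣ Γ_v(x - m) dx = e^(m + v/2)`, so the inner integral is `e^((x₁+x₂)/2 + v/2) x₁⁺ |f g|`, and
the elementary bound `e^((x₁+x₂)/2) x₁⁺ ≤ (1 + e^x₁)(1 + e^x₂)` splits what remains into the
product of the two weighted `L¹` norms, with `C = e^(σx²/2)`. -/

lemma enorm_integral_le_of_enorm_le {α E : Type*} [MeasurableSpace α] [NormedAddCommGroup E]
    [NormedSpace ℝ E] {μ : Measure α} {φ : α → E} {Ψ : α → ℝ≥0∞} (h : ∀ a, ‖φ a‖ₑ ≤ Ψ a) :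
    ‖∫ a, φ a ∂μ‖ₑ ≤ ∫⁻ a, Ψ a ∂μ :=
  (enorm_integral_le_lintegral_enorm φ).trans (lintegral_mono h)

lemma lintegral_enorm_eq_ofReal_integral {α : Type*} [MeasurableSpace α] {μ : Measure α}
    {φ : α → ℝ} (hφ : Integrable φ μ) (hφ0 : ∀ a, 0 ≤ φ a) :
    ∫⁻ a, ‖φ a‖ₑ ∂μ = ENNReal.ofReal (∫ a, φ a ∂μ) := by
  rw [lintegral_enorm_of_nonneg hφ0, ofReal_integral_eq_lintegral_ofReal hφ (ae_of_all _ hφ0)]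

lemma lintegral_prod_prod {α β γ δ : Type*} [MeasurableSpace α] [MeasurableSpace β]
    [MeasurableSpace γ] [MeasurableSpace δ] {μ : Measure α} {ν : Measure β} {ρ : Measure γ}
    {κ : Measure δ} [SFinite ν] [SFinite ρ] [SFinite κ] {F : (α × β) × (γ × δ) → ℝ≥0∞}
    (hF : Measurable F) :
    ∫⁻ q, F q ∂(μ.prod ν).prod (ρ.prod κ) =
      ∫⁻ a, ∫⁻ b, ∫⁻ c, ∫⁻ d, F ((a, b), (c, d)) ∂κ ∂ρ ∂ν ∂μ := by
  rw [lintegral_prod _ hF.aemeasurable, lintegral_prod _ hF.lintegral_prod_right'.aemeasurable]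
  refine lintegral_congr fun a => lintegral_congr fun b => ?_
  exact lintegral_prod _ (hF.comp measurable_prodMk_left).aemeasurable

lemma gauss_nonneg (v z : ℝ) : 0 ≤ gauss v z := by
  unfold gauss; positivity

@[fun_prop]
lemma measurable_gauss (v : ℝ) : Measurable (gauss v) := by
  unfold gauss; fun_prop

lemma gauss_sub_eq_gaussianPDFReal {v : ℝ} (hv : 0 ≤ v) (m x : ℝ) :
    gauss v (x - m) = ProbabilityTheory.gaussianPDFReal m v.toNNReal x := by
  simp [gauss, ProbabilityTheory.gaussianPDFReal_def, Real.coe_toNNReal v hv]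

lemma lintegral_gauss_sub {v : ℝ} (hv : 0 < v) (m : ℝ) :
    ∫⁻ x, ENNReal.ofReal (gauss v (x - m)) = 1 := by
  simp_rw [gauss_sub_eq_gaussianPDFReal hv.le]
  exact ProbabilityTheory.lintegral_gaussianPDFReal_eq_one m (by simpa using hv)

lemma exp_mul_gauss_sub {v : ℝ} (hv : 0 < v) (m x : ℝ) :
    exp x * gauss v (x - m) = exp (m + v / 2) * gauss v (x - (m + v)) := by
  have hexp : x + -(x - m) ^ 2 / (2 * v) = m + v / 2 + -(x - (m + v)) ^ 2 / (2 * v) := by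
    field_simp; ring
  simp only [gauss]
  rw [mul_left_comm, ← exp_add, hexp, exp_add]
  ring

lemma lintegral_exp_mul_gauss_sub {v : ℝ} (hv : 0 < v) (m : ℝ) :
    ∫⁻ x, ENNReal.ofReal (exp x * gauss v (x - m)) = ENNReal.ofReal (exp (m + v / 2)) := by
  simp_rw [exp_mul_gauss_sub hv m, ENNReal.ofReal_mul (exp_nonneg _)]
  rw [lintegral_const_mul' _ _ ENNReal.ofReal_ne_top, lintegral_gauss_sub hv, mul_one]

lemma exp_half_add_mul_max_le (x₁ x₂ : ℝ) :
    exp ((x₁ + x₂) / 2) * max x₁ 0 ≤ (1 + exp x₁) * (1 + exp x₂) := by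
  have hsq : ∀ x, exp (x / 2) * exp (x / 2) = exp x := fun x => by rw [← exp_add, add_halves]
  have hamgm : 2 * exp (x₂ / 2) ≤ 1 + exp x₂ := by
    nlinarith [sq_nonneg (exp (x₂ / 2) - 1), hsq x₂]
  have hmax : max x₁ 0 ≤ 2 * exp (x₁ / 2) :=
    max_le (by linarith [add_one_le_exp (x₁ / 2)]) (by positivity)
  calc exp ((x₁ + x₂) / 2) * max x₁ 0 = exp (x₁ / 2) * exp (x₂ / 2) * max x₁ 0 := by
        rw [← exp_add, add_div]
    _ ≤ exp (x₁ / 2) * exp (x₂ / 2) * (2 * exp (x₁ / 2)) := by gcongr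
    _ = exp x₁ * (2 * exp (x₂ / 2)) := by rw [← hsq x₁]; ring
    _ ≤ (1 + exp x₁) * (1 + exp x₂) := by gcongr; linarith

lemma ofReal_exp_mul_enorm_max_mul_le (v x₁ x₂ a b : ℝ) :
    ENNReal.ofReal (exp ((x₁ + x₂) / 2 + v / 2)) * ‖max x₁ 0 * (a * b)‖ₑ ≤
      ENNReal.ofReal (exp (v / 2)) * (‖(1 + exp x₁) * a‖ₑ * ‖(1 + exp x₂) * b‖ₑ) := by
  simp only [Real.enorm_eq_ofReal_abs]
  rw [← ENNReal.ofReal_mul (exp_nonneg _), ← ENNReal.ofReal_mul (abs_nonneg _),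
    ← ENNReal.ofReal_mul (exp_nonneg _)]
  refine ENNReal.ofReal_le_ofReal ?_
  have h := exp_half_add_mul_max_le x₁ x₂
  simp only [abs_mul, abs_of_nonneg (le_max_right x₁ 0),
    abs_of_pos (by positivity : 0 < 1 + exp x₁), abs_of_pos (by positivity : 0 < 1 + exp x₂),
    exp_add]
  calc exp ((x₁ + x₂) / 2) * exp (v / 2) * (max x₁ 0 * (|a| * |b|))
      = exp (v / 2) * (exp ((x₁ + x₂) / 2) * max x₁ 0) * (|a| * |b|) := by ring
    _ ≤ exp (v / 2) * ((1 + exp x₁) * (1 + exp x₂)) * (|a| * |b|) := by gcongr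
    _ = _ := by ring

lemma lintegral_exp_mul_gauss_mul_gauss {v w : ℝ} (hv : 0 < v) (hw : 0 < w) (m n c : ℝ) :
    ∫⁻ p : ℝ × ℝ, ‖exp p.1 * (gauss v (p.1 - m) * (gauss w (p.2 - n) * c))‖ₑ =
      ENNReal.ofReal (exp (m + v / 2)) * ‖c‖ₑ := by
  have hsplit : ∀ p : ℝ × ℝ, ‖exp p.1 * (gauss v (p.1 - m) * (gauss w (p.2 - n) * c))‖ₑ =
      ENNReal.ofReal (exp p.1 * gauss v (p.1 - m)) * ENNReal.ofReal (gauss w (p.2 - n)) *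
        ‖c‖ₑ := by
    intro p
    rw [← Real.enorm_of_nonneg (mul_nonneg (exp_nonneg _) (gauss_nonneg _ _)),
      ← Real.enorm_of_nonneg (gauss_nonneg _ _), ← enorm_mul, ← enorm_mul]
    ring_nf
  simp_rw [hsplit]
  rw [lintegral_mul_const' _ _ enorm_ne_top, Measure.volume_eq_prod,
    lintegral_prod_mul (f := fun x => ENNReal.ofReal (exp x * gauss v (x - m)))
      (g := fun y => ENNReal.ofReal (gauss w (y - n))) (by fun_prop) (by fun_prop),
    lintegral_exp_mul_gauss_sub hv, lintegral_gauss_sub hw, mul_one]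

lemma lintegral_exp_mul_bilinear_le {v w : ℝ} (hv : 0 < v) (hw : 0 < w) {f g : ℝ → ℝ → ℝ}
    (hf : Measurable fun p : ℝ × ℝ => f p.1 p.2) (hg : Measurable fun p : ℝ × ℝ => g p.1 p.2) :
    ∫⁻ x, ∫⁻ y, ∫⁻ x₁, ∫⁻ y₁, ∫⁻ x₂, ∫⁻ y₂, ‖exp x * (gauss v (x - (x₁ + x₂) / 2) *
        gauss w (y - (y₁ + y₂) / 2) * max x₁ 0 * f x₁ y₁ * g x₂ y₂)‖ₑ ≤
      ENNReal.ofReal (exp (v / 2)) * (∫⁻ p : ℝ × ℝ, ‖(1 + exp p.1) * f p.1 p.2‖ₑ) *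
        ∫⁻ p : ℝ × ℝ, ‖(1 + exp p.1) * g p.1 p.2‖ₑ := by
  set Φ : (ℝ × ℝ) × (ℝ × ℝ) × (ℝ × ℝ) → ℝ≥0∞ := fun z => ‖exp z.1.1 *
    (gauss v (z.1.1 - (z.2.1.1 + z.2.2.1) / 2) * gauss w (z.1.2 - (z.2.1.2 + z.2.2.2) / 2) *
      max z.2.1.1 0 * f z.2.1.1 z.2.1.2 * g z.2.2.1 z.2.2.2)‖ₑ with hΦ
  have hΦm : Measurable Φ := by
    have hf' : Measurable fun z : (ℝ × ℝ) × (ℝ × ℝ) × (ℝ × ℝ) => f z.2.1.1 z.2.1.2 :=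
      hf.comp (by fun_prop)
    have hg' : Measurable fun z : (ℝ × ℝ) × (ℝ × ℝ) × (ℝ × ℝ) => g z.2.2.1 z.2.2.2 :=
      hg.comp (by fun_prop)
    fun_prop
  have tonelli : ∫⁻ x, ∫⁻ y, ∫⁻ x₁, ∫⁻ y₁, ∫⁻ x₂, ∫⁻ y₂, Φ ((x, y), ((x₁, y₁), (x₂, y₂))) =
      ∫⁻ q : (ℝ × ℝ) × (ℝ × ℝ), ∫⁻ p : ℝ × ℝ, Φ (p, q) := by
    have hinner : ∀ p : ℝ × ℝ, ∫⁻ q, Φ (p, q) =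
        ∫⁻ x₁, ∫⁻ y₁, ∫⁻ x₂, ∫⁻ y₂, Φ (p, ((x₁, y₁), (x₂, y₂))) := fun p => by
      rw [Measure.volume_eq_prod, Measure.volume_eq_prod]
      exact lintegral_prod_prod (F := fun q => Φ (p, q)) (hΦm.comp measurable_prodMk_left)
    simp_rw [← hinner]
    rw [lintegral_lintegral (f := fun x y => ∫⁻ q, Φ ((x, y), q))
      (by exact hΦm.lintegral_prod_right'.aemeasurable)]
    exact lintegral_lintegral_swap hΦm.aemeasurable
  have hF : Measurable fun a : ℝ × ℝ => ‖(1 + exp a.1) * f a.1 a.2‖ₑ := by fun_prop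
  have hG : Measurable fun b : ℝ × ℝ => ‖(1 + exp b.1) * g b.1 b.2‖ₑ := by fun_prop
  calc _ = ∫⁻ q : (ℝ × ℝ) × (ℝ × ℝ), ∫⁻ p : ℝ × ℝ, Φ (p, q) := tonelli
    _ = ∫⁻ q : (ℝ × ℝ) × (ℝ × ℝ), ENNReal.ofReal (exp ((q.1.1 + q.2.1) / 2 + v / 2)) *
          ‖max q.1.1 0 * (f q.1.1 q.1.2 * g q.2.1 q.2.2)‖ₑ := by
      refine lintegral_congr fun q => ?_
      simp only [hΦ, mul_assoc]
      exact lintegral_exp_mul_gauss_mul_gauss hv hw _ _ _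
    _ ≤ ∫⁻ q : (ℝ × ℝ) × (ℝ × ℝ), ENNReal.ofReal (exp (v / 2)) *
          (‖(1 + exp q.1.1) * f q.1.1 q.1.2‖ₑ * ‖(1 + exp q.2.1) * g q.2.1 q.2.2‖ₑ) :=
      lintegral_mono fun q => ofReal_exp_mul_enorm_max_mul_le _ _ _ _ _
    _ = _ := by
      rw [lintegral_const_mul' _ _ ENNReal.ofReal_ne_top, Measure.volume_eq_prod,
        lintegral_prod_mul hF.aemeasurable hG.aemeasurable, mul_assoc]

theorem stmt_2 (σx σy : ℝ) (hσx : 0 < σx) (hσy : 0 < σy) :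
    ∃ C > 0, ∀ f g : ℝ → ℝ → ℝ,
      (∀ x y, 0 ≤ f x y) → (∀ x y, 0 ≤ g x y) →
      Measurable (fun p : ℝ × ℝ => f p.1 p.2) →
      Measurable (fun p : ℝ × ℝ => g p.1 p.2) →
      Integrable (fun p : ℝ × ℝ => (1 + Real.exp p.1) * f p.1 p.2) →
      Integrable (fun p : ℝ × ℝ => (1 + Real.exp p.1) * g p.1 p.2) →
      (∫ x : ℝ, ∫ y : ℝ, Real.exp x *
          ∫ x₁ : ℝ, ∫ y₁ : ℝ, ∫ x₂ : ℝ, ∫ y₂ : ℝ,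
            gauss (σx ^ 2) (x - (x₁ + x₂) / 2) * gauss (σy ^ 2) (y - (y₁ + y₂) / 2) *
              max x₁ 0 * f x₁ y₁ * g x₂ y₂)
        ≤ C * (∫ p : ℝ × ℝ, (1 + Real.exp p.1) * f p.1 p.2) *
            (∫ p : ℝ × ℝ, (1 + Real.exp p.1) * g p.1 p.2) := by
  refine ⟨exp (σx ^ 2 / 2), exp_pos _, fun f g hf0 hg0 hfm hgm hfi hgi => ?_⟩
  have hf0' (p : ℝ × ℝ) : 0 ≤ (1 + exp p.1) * f p.1 p.2 := mul_nonneg (by positivity) (hf0 _ _)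
  have hg0' (p : ℝ × ℝ) : 0 ≤ (1 + exp p.1) * g p.1 p.2 := mul_nonneg (by positivity) (hg0 _ _)
  have hA0 : 0 ≤ ∫ p : ℝ × ℝ, (1 + exp p.1) * f p.1 p.2 := integral_nonneg hf0'
  have hB0 : 0 ≤ ∫ p : ℝ × ℝ, (1 + exp p.1) * g p.1 p.2 := integral_nonneg hg0'
  have hCA := mul_nonneg (exp_pos (σx ^ 2 / 2)).le hA0
  refine (le_abs_self _).trans ((ENNReal.ofReal_le_ofReal_iff (mul_nonneg hCA hB0)).1 ?_)
  rw [← Real.enorm_eq_ofReal_abs, ENNReal.ofReal_mul hCA, ENNReal.ofReal_mul (exp_pos _).le,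
    ← lintegral_enorm_eq_ofReal_integral hfi hf0', ← lintegral_enorm_eq_ofReal_integral hgi hg0']
  refine le_trans ?_ (lintegral_exp_mul_bilinear_le (pow_pos hσx 2) (pow_pos hσy 2) hfm hgm)
  simp_rw [← integral_const_mul]
  iterate 6 refine enorm_integral_le_of_enorm_le fun _ => ?_
  exact le_rfl
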